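/- If every complex of finitely generated free left R-modules is semi-projective, then every complex of projective left R-modules is semi-projective. -/

import Mathlib

open CategoryTheory CategoryTheory.Limits ZeroObject

noncomputable section

/-! ### The balanced tensor product `M ⊗_R N` of a right `R`-module `M` and a left
`R`-module `N`, defined as a quotient of `M ⊗_ℤ N`. -/

section Bal

variable (R : Type) [Ring R]
variable (M : Type) [AddCommGroup M] [Module Rᵐᵒᵖ M]
variable (N : Type) [AddCommGroup N] [Module R N]

/-- The subgroup of balancing relations in `M ⊗_ℤ N`. -/
def balRel : Submodule ℤ (TensorProduct ℤ M N) :=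
  Submodule.span ℤ { x | ∃ (r : R) (m : M) (n : N),
    x = (MulOpposite.op r • m) ⊗ₜ[ℤ] n - m ⊗ₜ[ℤ] (r • n) }

/-- The balanced tensor product `M ⊗_R N` of a right `R`-module `M` and a left
`R`-module `N`, as an abelian group (ℤ-module). -/
abbrev Bal := TensorProduct ℤ M N ⧸ balRel R M N

variable {M N}
variable {M' M'' : Type} [AddCommGroup M'] [Module Rᵐᵒᵖ M'] [AddCommGroup M''] [Module Rᵐᵒᵖ M'']
variable {N' N'' : Type} [AddCommGroup N'] [Module R N'] [AddCommGroup N''] [Module R N'']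

/-- Functoriality of the balanced tensor product. -/
def Bal.map (f : M →ₗ[Rᵐᵒᵖ] M') (g : N →ₗ[R] N') :
    Bal R M N →ₗ[ℤ] Bal R M' N' :=
  Submodule.mapQ _ _ (TensorProduct.map (f.restrictScalars ℤ) (g.restrictScalars ℤ)) (by
    rw [balRel, Submodule.span_le]
    rintro x ⟨r, m, n, rfl⟩
    refine Submodule.subset_span ?_
    exact ⟨r, f m, g n, by erw [LinearMap.map_sub, TensorProduct.map_tmul, TensorProduct.map_tmul]; simp [map_smul]⟩)

@[simp] lemma Bal.map_mk (f : M →ₗ[Rᵐᵒᵖ] M') (g : N →ₗ[R] N') (m : M) (n : N) :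
    Bal.map R f g (Submodule.Quotient.mk (m ⊗ₜ[ℤ] n)) =
      Submodule.Quotient.mk (f m ⊗ₜ[ℤ] g n) := by
  rw [Bal.map]; erw [Submodule.mapQ_apply]; rfl

lemma Bal.hom_ext {P : Type} [AddCommGroup P] [Module ℤ P]
    {h h' : Bal R M N →ₗ[ℤ] P}
    (H : ∀ (m : M) (n : N), h (Submodule.Quotient.mk (m ⊗ₜ[ℤ] n)) =
      h' (Submodule.Quotient.mk (m ⊗ₜ[ℤ] n))) : h = h' := by
  apply Submodule.linearMap_qext
  exact TensorProduct.ext' H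

lemma Bal.map_id :
    Bal.map R (LinearMap.id : M →ₗ[Rᵐᵒᵖ] M) (LinearMap.id : N →ₗ[R] N) = LinearMap.id := by
  apply Bal.hom_ext; intro m n; rw [Bal.map_mk]; rfl

lemma Bal.map_comp (f : M →ₗ[Rᵐᵒᵖ] M') (f' : M' →ₗ[Rᵐᵒᵖ] M'')
    (g : N →ₗ[R] N') (g' : N' →ₗ[R] N'') :
    Bal.map R (f'.comp f) (g'.comp g) = (Bal.map R f' g').comp (Bal.map R f g) := by
  apply Bal.hom_ext; intro m n
  simp

lemma Bal.map_add_left (f f' : M →ₗ[Rᵐᵒᵖ] M') (g : N →ₗ[R] N') :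
    Bal.map R (f + f') g = Bal.map R f g + Bal.map R f' g := by
  apply Bal.hom_ext; intro m n
  simp [← Submodule.Quotient.mk_add, ← TensorProduct.add_tmul]

lemma Bal.map_add_right (f : M →ₗ[Rᵐᵒᵖ] M') (g g' : N →ₗ[R] N') :
    Bal.map R f (g + g') = Bal.map R f g + Bal.map R f g' := by
  apply Bal.hom_ext; intro m n
  simp [← Submodule.Quotient.mk_add, ← TensorProduct.tmul_add]

end Bal

/-! ### The balanced tensor product as a bifunctor -/

section balFunctor

variable (R : Type) [Ring R]

/-- The balanced tensor product bifunctor `ModuleCat Rᵐᵒᵖ ⥤ ModuleCat R ⥤ ModuleCat ℤ`. -/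
def balFunctor : ModuleCat.{0} Rᵐᵒᵖ ⥤ ModuleCat.{0} R ⥤ ModuleCat.{0} ℤ where
  obj M :=
    { obj := fun N => ModuleCat.of ℤ (Bal R M N)
      map := fun {N N'} g => ModuleCat.ofHom (Bal.map R LinearMap.id g.hom)
      map_id := fun N => ModuleCat.hom_ext (Bal.map_id R)
      map_comp := fun {N₁ N₂ N₃} g g' => by
        apply ModuleCat.hom_ext
        have := Bal.map_comp R (LinearMap.id : M →ₗ[Rᵐᵒᵖ] M) LinearMap.id g.hom g'.hom
        rw [LinearMap.id_comp] at this
        exact this }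
  map {M M'} f :=
    { app := fun N => ModuleCat.ofHom (Bal.map R f.hom LinearMap.id)
      naturality := fun {N N'} g => by
        apply ModuleCat.hom_ext
        show (Bal.map R f.hom LinearMap.id).comp (Bal.map R LinearMap.id g.hom)
          = (Bal.map R LinearMap.id g.hom).comp (Bal.map R f.hom LinearMap.id)
        rw [← Bal.map_comp, ← Bal.map_comp]
        simp }
  map_id M := by
    ext N : 2
    apply ModuleCat.hom_ext
    exact Bal.map_id R
  map_comp {M₁ M₂ M₃} f f' := by
    ext N : 2
    apply ModuleCat.hom_ext
    show Bal.map R (f'.hom.comp f.hom) _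
      = (Bal.map R f'.hom LinearMap.id).comp (Bal.map R f.hom LinearMap.id)
    rw [← Bal.map_comp]
    simp

instance balFunctor_additive : (balFunctor R).Additive where
  map_add {M M'} {f f'} := by
    ext N : 2
    apply ModuleCat.hom_ext
    exact Bal.map_add_left R f.hom f'.hom LinearMap.id

instance balFunctor_obj_additive (M : ModuleCat.{0} Rᵐᵒᵖ) :
    ((balFunctor R).obj M).Additive where
  map_add {N N'} {g g'} := ModuleCat.hom_ext (Bal.map_add_right R LinearMap.id g.hom g'.hom)

end balFunctor

/-! ### Module-theoretic notions over a not necessarily commutative ring.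
Right `R`-modules are treated as (left) modules over the opposite ring `Rᵐᵒᵖ`. -/

section ModuleNotions

variable (R : Type) [Ring R]

/-- A left `R`-module `N` is flat if tensoring with it preserves injectivity of maps of
right `R`-modules. -/
def FlatModule (N : Type) [AddCommGroup N] [Module R N] : Prop :=
  ∀ (M M' : Type) [AddCommGroup M] [Module Rᵐᵒᵖ M] [AddCommGroup M'] [Module Rᵐᵒᵖ M']
    (f : M →ₗ[Rᵐᵒᵖ] M'), Function.Injective f →
      Function.Injective (Bal.map R f (LinearMap.id : N →ₗ[R] N))

/-- Vanishing of `Ext¹_R(X, Y)`, expressed by the splitting of every short exact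
sequence `0 → Y → E → X → 0`. -/
def ext1Zero (X Y : Type) [AddCommGroup X] [Module R X] [AddCommGroup Y] [Module R Y] :
    Prop :=
  ∀ (E : Type) [AddCommGroup E] [Module R E] (i : Y →ₗ[R] E) (p : E →ₗ[R] X),
    Function.Injective i → Function.Surjective p → Function.Exact i p →
      ∃ s : X →ₗ[R] E, p.comp s = LinearMap.id

/-- A left `R`-module `C` is cotorsion if `Ext¹_R(F, C) = 0` for every flat left
`R`-module `F`. -/
def CotorsionModule (C : Type) [AddCommGroup C] [Module R C] : Prop :=
  ∀ (F : Type) [AddCommGroup F] [Module R F], FlatModule R F → ext1Zero R F C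

/-- A left `R`-module `E` is fp-injective if `Ext¹_R(F, E) = 0` for every finitely
presented left `R`-module `F`. -/
def FpInjectiveModule (E : Type) [AddCommGroup E] [Module R E] : Prop :=
  ∀ (F : Type) [AddCommGroup F] [Module R F],
    Module.FinitePresentation R F → ext1Zero R F E

/-- A left `R`-module `P` is fp-projective if `Ext¹_R(P, E) = 0` for every fp-injective
left `R`-module `E`. -/
def FpProjectiveModule (P : Type) [AddCommGroup P] [Module R P] : Prop :=
  ∀ (E : Type) [AddCommGroup E] [Module R E], FpInjectiveModule R E → ext1Zero R P E

/-- `ProjDimLE R n M` says that the left `R`-module `M` has projective dimension at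
most `n`, i.e. it admits a projective resolution of length `n`. -/
def ProjDimLE : ℕ → ∀ (M : Type) [AddCommGroup M] [Module R M], Prop
  | 0 => fun M _ _ => Module.Projective R M
  | n + 1 => fun M _ _ =>
      ∃ (P : Type) (_ : AddCommGroup P) (_ : Module R P) (p : P →ₗ[R] M),
        Module.Projective R P ∧ Function.Surjective p ∧
          ProjDimLE n (LinearMap.ker p)

/-- A left `R`-module has finite projective dimension if it admits a finite projective
resolution. -/
def FiniteProjDim (M : Type) [AddCommGroup M] [Module R M] : Prop :=
  ∃ n : ℕ, ProjDimLE R n M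

/-- `FlatDimLE R n M` says that the left `R`-module `M` has flat dimension at most `n`,
i.e. it admits a flat resolution of length `n`. -/
def FlatDimLE : ℕ → ∀ (M : Type) [AddCommGroup M] [Module R M], Prop
  | 0 => fun M _ _ => FlatModule R M
  | n + 1 => fun M _ _ =>
      ∃ (F : Type) (_ : AddCommGroup F) (_ : Module R F) (p : F →ₗ[R] M),
        FlatModule R F ∧ Function.Surjective p ∧
          FlatDimLE n (LinearMap.ker p)

/-- A left `R`-module has finite flat dimension if it admits a finite flat resolution. -/
def FiniteFlatDim (M : Type) [AddCommGroup M] [Module R M] : Prop :=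
  ∃ n : ℕ, FlatDimLE R n M

/-- `R` is right coherent: every finitely generated right ideal of `R` is finitely
presented as a right `R`-module. -/
def RightCoherent : Prop :=
  ∀ I : Submodule Rᵐᵒᵖ R, I.FG → Module.FinitePresentation Rᵐᵒᵖ I

/-- `R` is right regular: every finitely generated right ideal of `R` has finite
projective dimension as a right `R`-module. -/
def RightRegular : Prop :=
  ∀ I : Submodule Rᵐᵒᵖ R, I.FG → FiniteProjDim Rᵐᵒᵖ I

/-- `R` is left coherent: every finitely generated left ideal of `R` is finitely
presented as a left `R`-module. -/
def LeftCoherent : Prop :=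
  ∀ I : Submodule R R, I.FG → Module.FinitePresentation R I

/-- `R` is left regular: every finitely generated left ideal of `R` has finite
projective dimension as a left `R`-module. -/
def LeftRegular : Prop :=
  ∀ I : Submodule R R, I.FG → FiniteProjDim R I

/-- `R` is von Neumann regular if every element `a` has a quasi-inverse `b` with
`a * b * a = a`. -/
def VonNeumannRegular : Prop := ∀ a : R, ∃ b : R, a * b * a = a

/-- An object `M` of `ModuleCat A` admits a projective resolution by degreewise
finitely generated projective modules. -/
def HasDegreewiseFGProjectiveResolution {A : Type} [Ring A] (M : ModuleCat.{0} A) : Prop :=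
  ∃ res : ProjectiveResolution M, ∀ n : ℕ, Module.Finite A (res.complex.X n)

end ModuleNotions

/-! ### Complexes -/

section Complexes

variable (A : Type) [Ring A]

/-- Unbounded (cochain) complexes of modules. -/
abbrev Cx := CochainComplex (ModuleCat.{0} A) ℤ

/-- A complex is acyclic if it is exact in every degree. -/
def IsAcyclic (C : Cx A) : Prop := ∀ n : ℤ, C.ExactAt n

/-- Acyclicity for complexes of abelian groups. -/
def IsAcyclicAb (C : CochainComplex AddCommGrpCat.{0} ℤ) : Prop := ∀ n : ℤ, C.ExactAt n

/-- Acyclicity for complexes of ℤ-modules. -/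
def IsAcyclicZMod (C : CochainComplex (ModuleCat.{0} ℤ) ℤ) : Prop := ∀ n : ℤ, C.ExactAt n

/-- A complex is contractible if it is homotopy equivalent to the zero complex. -/
def IsContractible (C : Cx A) : Prop := Nonempty (HomotopyEquiv C (0 : Cx A))

variable {A}

/-- A complex `P` is semi-projective if it consists of projective modules and the total
Hom complex `Hom(P, C)` is acyclic for every acyclic complex `C`. -/
def SemiProjective (P : Cx A) : Prop :=
  (∀ n : ℤ, Module.Projective A (P.X n)) ∧
  ∀ C : Cx A, IsAcyclic A C → IsAcyclicAb (CochainComplex.HomComplex P C)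

/-- A complex `I` is semi-injective if it consists of injective modules and the total
Hom complex `Hom(C, I)` is acyclic for every acyclic complex `C`. -/
def SemiInjective (I : Cx A) : Prop :=
  (∀ n : ℤ, Module.Injective A (I.X n)) ∧
  ∀ C : Cx A, IsAcyclic A C → IsAcyclicAb (CochainComplex.HomComplex C I)

variable (A)

/-- A complex `E` (of right modules, say) is semi-fp-injective if it consists of
fp-injective modules and the total Hom complex `Hom(X, E)` is acyclic for every acyclic
complex `X` whose cycle modules are all fp-projective. -/
def SemiFpInjective (E : Cx A) : Prop :=
  (∀ n : ℤ, FpInjectiveModule A (E.X n)) ∧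
  ∀ X : Cx A, IsAcyclic A X → (∀ n : ℤ, FpProjectiveModule A (X.cycles n)) →
    IsAcyclicAb (CochainComplex.HomComplex X E)

variable {A}

end Complexes

section TensorComplexes

variable (R : Type) [Ring R]

/-- The total tensor complex `K ⊗_R L` of a complex `K` of right `R`-modules and a
complex `L` of left `R`-modules. -/
def tensorComplex (K : Cx Rᵐᵒᵖ) (L : Cx R) : CochainComplex (ModuleCat.{0} ℤ) ℤ :=
  HomologicalComplex.mapBifunctor K L (balFunctor R) (ComplexShape.up ℤ)

/-- A complex `F` of left `R`-modules is semi-flat if it consists of flat modules and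
the tensor complex `K ⊗_R F` is acyclic for every acyclic complex `K` of right
`R`-modules. -/
def SemiFlat (F : Cx R) : Prop :=
  (∀ n : ℤ, FlatModule R (F.X n)) ∧
  ∀ K : Cx Rᵐᵒᵖ, IsAcyclic Rᵐᵒᵖ K → IsAcyclicZMod (tensorComplex R K F)

/-- An acyclic complex `X` of left `R`-modules is pure acyclic if each short exact
sequence `0 → Z^n(X) → X^n → Z^{n+1}(X) → 0` of cycle modules is pure exact, i.e.
stays a short exact sequence after tensoring with every right `R`-module `M`. -/
def PureAcyclic (X : Cx R) : Prop :=
  IsAcyclic R X ∧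
  ∀ (n : ℤ) (M : ModuleCat.{0} Rᵐᵒᵖ),
    Function.Injective (((balFunctor R).obj M).map (X.iCycles n)) ∧
    Function.Exact (((balFunctor R).obj M).map (X.iCycles n))
      (((balFunctor R).obj M).map (X.toCycles n (n + 1))) ∧
    Function.Surjective (((balFunctor R).obj M).map (X.toCycles n (n + 1)))

/-- `S ⊗_R -` is exact and reflects exactness, where `S` is a right `R`-module. -/
def FaithfullyFlatRight (S : Type) [AddCommGroup S] [Module Rᵐᵒᵖ S] : Prop :=
  ∀ (N₁ N₂ N₃ : Type) [AddCommGroup N₁] [Module R N₁] [AddCommGroup N₂] [Module R N₂]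
    [AddCommGroup N₃] [Module R N₃] (g₁ : N₁ →ₗ[R] N₂) (g₂ : N₂ →ₗ[R] N₃),
    Function.Exact g₁ g₂ ↔
      Function.Exact (Bal.map R (LinearMap.id : S →ₗ[Rᵐᵒᵖ] S) g₁)
        (Bal.map R (LinearMap.id : S →ₗ[Rᵐᵒᵖ] S) g₂)

end TensorComplexes

/-! A complex `P` of projectives is a retract of the complex of free modules obtained by adding
to `P` the contractible disks on `W n = (P^n →₀ R)^(ℕ)` (by the Eilenberg swindle `P^n ⊕ W n` is
free), and exactness of `Hom(-, C)` passes to retracts.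

For a complex `F` of free modules with chosen bases and a cocycle `z` in `Hom(F, C)`, Zorn's lemma
gives a maximal primitive of `z` defined on the span of a set of basis vectors that is closed under
taking supports of differentials. It is defined everywhere: every basis vector lies in a closed set
that is finite in each degree, and if `S ⊆ T` are closed with `T \ S` finite in each degree, then
`span T / span S` is a complex of finitely generated free modules, hence semi-projective, which
lets a primitive on `span S` be extended to `span T`. -/

open CochainComplex.HomComplex

section HomComplex

variable {𝒞 : Type*} [Category 𝒞] [Preadditive 𝒞]

lemma homComplex_exactAt_iff (K L : CochainComplex 𝒞 ℤ) {m n : ℤ} (hmn : m + 1 = n) :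
    (CochainComplex.HomComplex K L).ExactAt n ↔
      ∀ z : Cochain K L n, δ n (n + 1) z = 0 → ∃ y : Cochain K L m, δ m n y = z := by
  rw [HomologicalComplex.exactAt_iff' _ m n (n + 1) (by simp [← hmn]) (by simp),
    ShortComplex.ab_exact_iff]
  exact Iff.rfl

lemma homComplex_exactAt_of_retract {K K' : CochainComplex 𝒞 ℤ} (i : K ⟶ K') (r : K' ⟶ K)
    (hir : i ≫ r = 𝟙 K) (L : CochainComplex 𝒞 ℤ) {n : ℤ}
    (h : (CochainComplex.HomComplex K' L).ExactAt n) :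
    (CochainComplex.HomComplex K L).ExactAt n := by
  rw [homComplex_exactAt_iff _ _ (sub_add_cancel n 1)] at h ⊢
  intro z hz
  obtain ⟨y, hy⟩ := h ((Cochain.ofHom r).comp z (zero_add n))
    (by rw [δ_ofHom_comp, hz, Cochain.comp_zero])
  refine ⟨(Cochain.ofHom i).comp y (zero_add _), ?_⟩
  rw [δ_ofHom_comp, hy, ← Cochain.comp_assoc_of_first_is_zero_cochain, ← Cochain.ofHom_comp,
    hir, Cochain.id_comp]

end HomComplex

lemma δ_v_apply {A : Type} [Ring A] {K L : Cx A} {m n : ℤ} (hmn : m + 1 = n)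
    (c : Cochain K L m) (p : ℤ) (x : K.X p) :
    (δ m n c).v p (p + n) rfl x =
      L.d (p + m) (p + n) (c.v p (p + m) rfl x) +
        n.negOnePow • c.v (p + 1) (p + n) (by omega) (K.d p (p + 1) x) := by
  rw [δ_v m n hmn c p (p + n) rfl (p + m) (p + 1) (by omega) rfl]
  simp

section Swindle

variable {R : Type*} [Ring R]

def Finsupp.prodLinearEquivProdFinsupp (α M N : Type*) [AddCommGroup M] [Module R M]
    [AddCommGroup N] [Module R N] : (α →₀ M × N) ≃ₗ[R] (α →₀ M) × (α →₀ N) :=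
  LinearEquiv.ofLinearMap
    ((Finsupp.mapRange.linearMap (LinearMap.fst R M N)).prod
      (Finsupp.mapRange.linearMap (LinearMap.snd R M N)))
    ((Finsupp.mapRange.linearMap (LinearMap.inl R M N)).comp (LinearMap.fst R _ _) +
      (Finsupp.mapRange.linearMap (LinearMap.inr R M N)).comp (LinearMap.snd R _ _))
    (by ext <;> simp) (by ext <;> simp)

def Finsupp.natConsLinearEquiv (M : Type*) [AddCommGroup M] [Module R M] :
    (M × (ℕ →₀ M)) ≃ₗ[R] (ℕ →₀ M) :=
  (LinearEquiv.prodComm R _ _).trans <|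
    ((LinearEquiv.refl R _).prodCongr
      (Finsupp.uniqueLinearEquiv R M (PUnit.unit : PUnit.{1})).symm).trans <|
    (Finsupp.sumFinsuppLEquivProdFinsupp R).symm.trans
      (Finsupp.domLCongr Equiv.natSumPUnitEquivNat)

/-- Eilenberg swindle: `M ⊕ G^(ℕ) ≅ M ⊕ (M ⊕ K)^(ℕ) ≅ (M ⊕ K)^(ℕ) = G^(ℕ)`. -/
lemma Module.Free.prod_finsupp_of_linearEquiv_prod {M K G : Type*} [AddCommGroup M]
    [Module R M] [AddCommGroup K] [Module R K] [AddCommGroup G] [Module R G] [Module.Free R G]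
    (e : G ≃ₗ[R] M × K) : Module.Free R (M × (ℕ →₀ G)) :=
  Module.Free.of_equiv <| LinearEquiv.symm <|
    ((LinearEquiv.refl R M).prodCongr ((Finsupp.mapRange.linearEquiv e).trans
        (Finsupp.prodLinearEquivProdFinsupp ℕ M K))).trans <|
      (LinearEquiv.prodAssoc R _ _ _).symm.trans <|
      ((Finsupp.natConsLinearEquiv M).prodCongr (LinearEquiv.refl R _)).trans <|
      (Finsupp.prodLinearEquivProdFinsupp ℕ M K).symm.trans (Finsupp.mapRange.linearEquiv e.symm)

lemma Module.Projective.free_prod_finsupp (M : Type*) [AddCommGroup M] [Module R M]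
    [Module.Projective R M] : Module.Free R (M × (ℕ →₀ (M →₀ R))) := by
  obtain ⟨s, hs⟩ := (Finsupp.linearCombination R (id : M → M)).exists_rightInverse_of_surjective
    (LinearMap.range_eq_top.2 fun m => ⟨Finsupp.single m 1, by simp⟩)
  exact Module.Free.prod_finsupp_of_linearEquiv_prod <|
    ((LinearMap.exact_subtype_ker_map _).splitSurjectiveEquiv (Submodule.injective_subtype _)
      ⟨s, hs⟩).1.trans (LinearEquiv.prodComm R _ _)

end Swindle

namespace CochainComplex

variable {R : Type} [Ring R] (P : Cx R) (W : ℤ → ModuleCat.{0} R)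

/-- `P` plus, for each `n`, the contractible disk `W n → W n` sitting in degrees `n - 1, n`. -/
def addDisks : Cx R :=
  CochainComplex.of (fun n => ModuleCat.of R (P.X n × (W (n + 1) × W n)))
    (fun n => ModuleCat.ofHom <|
      ((P.d n (n + 1)).hom ∘ₗ LinearMap.fst R _ _).prod
        ((0 : _ →ₗ[R] W (n + 1 + 1)).prod
          (LinearMap.fst R (W (n + 1)) (W n) ∘ₗ LinearMap.snd R _ _)))
    (fun n => ModuleCat.hom_ext <| LinearMap.ext fun x =>
      Prod.ext congr($(P.d_comp_d n (n + 1) (n + 1 + 1)) x.1) rfl)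

lemma addDisks_d (n : ℤ) (x : P.X n) (a : W (n + 1)) (b : W n) :
    (P.addDisks W).d n (n + 1) (x, a, b) = (P.d n (n + 1) x, 0, a) := by
  simp only [addDisks, CochainComplex.of_d]
  rfl

def toAddDisks : P ⟶ P.addDisks W where
  f n := ModuleCat.ofHom (LinearMap.inl R _ _)
  comm' i j hij := by
    obtain rfl : i + 1 = j := hij
    exact ModuleCat.hom_ext <| LinearMap.ext fun x => P.addDisks_d W i x 0 0

def fromAddDisks : P.addDisks W ⟶ P where
  f n := ModuleCat.ofHom (LinearMap.fst R _ _)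
  comm' i j hij := by
    obtain rfl : i + 1 = j := hij
    exact ModuleCat.hom_ext <| LinearMap.ext fun x =>
      congr_arg Prod.fst (P.addDisks_d W i x.1 x.2.1 x.2.2).symm

@[simp]
lemma toAddDisks_comp_fromAddDisks : P.toAddDisks W ≫ P.fromAddDisks W = 𝟙 P := rfl

lemma free_addDisks_X (n : ℤ) [Module.Free R (P.X n × W n)] [Module.Free R (W (n + 1))] :
    Module.Free R ((P.addDisks W).X n) :=
  Module.Free.of_equiv <| (LinearEquiv.prodAssoc R _ _ _).trans
    ((LinearEquiv.refl R _).prodCongr (LinearEquiv.prodComm R _ _))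

end CochainComplex

section BasisSpan

variable {R : Type} [Ring R] {F : Cx R} {B : ℤ → Type} (b : ∀ p, Module.Basis (B p) R (F.X p))

def dSupport (p : ℤ) (i : B p) : Finset (B (p + 1)) :=
  ((b (p + 1)).repr (F.d p (p + 1) (b p i))).support

def basisSpan (S : Set (Σ p, B p)) (p : ℤ) : Submodule R (F.X p) :=
  Submodule.span R (b p '' (Sigma.mk p ⁻¹' S))

def IsSupportClosed (S : Set (Σ p, B p)) : Prop :=
  ∀ ⦃p : ℤ⦄ ⦃i : B p⦄, ⟨p, i⟩ ∈ S → ∀ l ∈ dSupport b p i, ⟨p + 1, l⟩ ∈ S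

variable {b}

lemma basis_mem_basisSpan {S : Set (Σ p, B p)} {p : ℤ} {i : B p} (hi : ⟨p, i⟩ ∈ S) :
    b p i ∈ basisSpan b S p :=
  Submodule.subset_span ⟨i, hi, rfl⟩

lemma basisSpan_mono {S T : Set (Σ p, B p)} (h : S ⊆ T) (p : ℤ) :
    basisSpan b S p ≤ basisSpan b T p :=
  Submodule.span_mono (Set.image_mono (Set.preimage_mono h))

lemma eqOn_basisSpan {S : Set (Σ p, B p)} {p : ℤ} {M : Type*} [AddCommGroup M] [Module R M]
    {f g : F.X p →ₗ[R] M} (h : ∀ i, ⟨p, i⟩ ∈ S → f (b p i) = g (b p i)) :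
    Set.EqOn f g (basisSpan b S p) :=
  LinearMap.eqOn_span' (by rintro _ ⟨i, hi, rfl⟩; exact h i hi)

lemma IsSupportClosed.d_mem {S : Set (Σ p, B p)} (hS : IsSupportClosed b S) {p : ℤ}
    {v : F.X p} (hv : v ∈ basisSpan b S p) : F.d p (p + 1) v ∈ basisSpan b S (p + 1) := by
  induction hv using Submodule.span_induction with
  | mem x hx =>
    obtain ⟨i, hi, rfl⟩ := hx
    rw [← (b (p + 1)).linearCombination_repr (F.d p (p + 1) (b p i))]
    exact Submodule.sum_mem _ fun l hl =>
      Submodule.smul_mem _ _ (basis_mem_basisSpan (hS hi l hl))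
  | zero => simp
  | add x y _ _ hx hy => simpa using add_mem hx hy
  | smul r x _ hx => simpa using Submodule.smul_mem _ r hx

lemma isSupportClosed_iUnion {ι : Type*} {S : ι → Set (Σ p, B p)}
    (h : ∀ j, IsSupportClosed b (S j)) : IsSupportClosed b (⋃ j, S j) := by
  intro p i hi l hl
  obtain ⟨j, hj⟩ := Set.mem_iUnion.1 hi
  exact Set.mem_iUnion.2 ⟨j, h j hj l hl⟩

lemma IsSupportClosed.union {S T : Set (Σ p, B p)} (hS : IsSupportClosed b S)
    (hT : IsSupportClosed b T) : IsSupportClosed b (S ∪ T) := by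
  rintro p i (hi | hi) l hl
  exacts [Or.inl (hS hi l hl), Or.inr (hT hi l hl)]

end BasisSpan

section ForwardClosure

variable {R : Type} [Ring R] {F : Cx R} {B : ℤ → Type} (b : ∀ p, Module.Basis (B p) R (F.X p))

open Classical in
def forwardLayer (x₀ : Σ p, B p) : ℕ → Finset (Σ p, B p)
  | 0 => {x₀}
  | k + 1 =>
    (forwardLayer x₀ k).biUnion fun x => (dSupport b x.1 x.2).image (Sigma.mk (x.1 + 1))

def forwardClosure (x₀ : Σ p, B p) : Set (Σ p, B p) :=
  ⋃ k, (forwardLayer b x₀ k : Set (Σ p, B p))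

variable {b}

lemma fst_eq_of_mem_forwardLayer {x₀ x : Σ p, B p} {k : ℕ} (hx : x ∈ forwardLayer b x₀ k) :
    x.1 = x₀.1 + k := by
  induction k generalizing x with
  | zero => simp_all [forwardLayer]
  | succ k ih =>
    simp only [forwardLayer, Finset.mem_biUnion, Finset.mem_image] at hx
    obtain ⟨y, hy, l, -, rfl⟩ := hx
    simp [ih hy, add_assoc]

lemma mem_forwardClosure_self (x₀ : Σ p, B p) : x₀ ∈ forwardClosure b x₀ :=
  Set.mem_iUnion.2 ⟨0, by simp [forwardLayer]⟩

lemma isSupportClosed_forwardClosure (x₀ : Σ p, B p) :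
    IsSupportClosed b (forwardClosure b x₀) := by
  intro p i hi l hl
  obtain ⟨k, hk⟩ := Set.mem_iUnion.1 hi
  refine Set.mem_iUnion.2 ⟨k + 1, ?_⟩
  simp only [forwardLayer, Finset.coe_biUnion, Set.mem_iUnion, Finset.mem_coe, Finset.mem_image]
  exact ⟨_, hk, l, hl, rfl⟩

/-- Each step raises the degree by one, so degree `p` is only reached at step `p - x₀.1`. -/
lemma finite_forwardClosure_slice (x₀ : Σ p, B p) (p : ℤ) :
    (Sigma.mk p ⁻¹' forwardClosure b x₀).Finite := by
  refine ((forwardLayer b x₀ (p - x₀.1).toNat).finite_toSet.preimage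
    sigma_mk_injective.injOn).subset fun i hi => ?_
  obtain ⟨k, hk⟩ := Set.mem_iUnion.1 hi
  have : p = x₀.1 + k := fst_eq_of_mem_forwardLayer hk
  obtain rfl : k = (p - x₀.1).toNat := by omega
  exact hk

end ForwardClosure

section Subquotient

variable {R : Type} [Ring R] {F : Cx R} {B : ℤ → Type} (b : ∀ p, Module.Basis (B p) R (F.X p))
  (S T : Set (Σ p, B p))

/-! The complex `span T / span S`, with basis the vectors in `T \ S`. -/

def subquotientIncl (p : ℤ) : (Sigma.mk p ⁻¹' (T \ S) →₀ R) →ₗ[R] F.X p :=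
  Finsupp.linearCombination R fun i => b p i

def subquotientProj (p : ℤ) : F.X p →ₗ[R] (Sigma.mk p ⁻¹' (T \ S) →₀ R) :=
  Finsupp.lcomapDomain _ Subtype.val_injective ∘ₗ (b p).repr

def subquotientD (p : ℤ) :
    (Sigma.mk p ⁻¹' (T \ S) →₀ R) →ₗ[R] (Sigma.mk (p + 1) ⁻¹' (T \ S) →₀ R) :=
  subquotientProj b S T (p + 1) ∘ₗ (F.d p (p + 1)).hom ∘ₗ subquotientIncl b S T p

variable {b S T}

lemma subquotientIncl_single {p : ℤ} (i : Sigma.mk p ⁻¹' (T \ S)) :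
    subquotientIncl b S T p (Finsupp.single i 1) = b p i := by
  rw [subquotientIncl, Finsupp.linearCombination_single, one_smul]

lemma subquotientProj_basis {p : ℤ} {i : B p} (hi : ⟨p, i⟩ ∈ T \ S) :
    subquotientProj b S T p (b p i) = Finsupp.single ⟨i, hi⟩ 1 := by
  classical
  ext k
  rw [subquotientProj, LinearMap.comp_apply]
  simp only [LinearEquiv.coe_coe, Module.Basis.repr_self, Finsupp.lcomapDomain_apply,
    Finsupp.comapDomain_apply, Finsupp.single_apply, Subtype.ext_iff]

lemma subquotientProj_basis_of_notMem {p : ℤ} {i : B p} (hi : ⟨p, i⟩ ∉ T \ S) :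
    subquotientProj b S T p (b p i) = 0 := by
  classical
  ext k
  rw [subquotientProj, LinearMap.comp_apply]
  simp only [LinearEquiv.coe_coe, Module.Basis.repr_self, Finsupp.lcomapDomain_apply,
    Finsupp.comapDomain_apply, Finsupp.single_apply, Finsupp.coe_zero, Pi.zero_apply,
    ite_eq_right_iff]
  rintro rfl
  exact absurd k.2 hi

lemma subquotientIncl_mem (p : ℤ) (x : Sigma.mk p ⁻¹' (T \ S) →₀ R) :
    subquotientIncl b S T p x ∈ basisSpan b T p :=
  Submodule.sum_mem _ fun i _ => Submodule.smul_mem _ _ (basis_mem_basisSpan i.2.1)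

lemma subquotientProj_eq_zero {p : ℤ} {v : F.X p} (hv : v ∈ basisSpan b S p) :
    subquotientProj b S T p v = 0 :=
  eqOn_basisSpan (g := 0) (fun _ hi => subquotientProj_basis_of_notMem fun h => h.2 hi) hv

lemma subquotientIncl_proj_sub_mem {p : ℤ} {v : F.X p} (hv : v ∈ basisSpan b T p) :
    subquotientIncl b S T p (subquotientProj b S T p v) - v ∈ basisSpan b S p := by
  refine (Submodule.span_le (p := (basisSpan b S p).comap
    (subquotientIncl b S T p ∘ₗ subquotientProj b S T p - LinearMap.id))).2 ?_ hv
  rintro _ ⟨i, hi, rfl⟩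
  simp only [SetLike.mem_coe, Submodule.mem_comap, LinearMap.sub_apply, LinearMap.comp_apply,
    LinearMap.id_apply]
  by_cases hiS : ⟨p, i⟩ ∈ S
  · rw [subquotientProj_basis_of_notMem (fun h => h.2 hiS), map_zero, zero_sub]
    exact neg_mem (basis_mem_basisSpan hiS)
  · rw [subquotientProj_basis (b := b) (S := S) (T := T) ⟨hi, hiS⟩, subquotientIncl_single,
      sub_self]
    exact zero_mem _

lemma map_subquotientIncl_proj {M : Type*} [AddCommGroup M] [Module R M] {p : ℤ}
    (f : F.X p →ₗ[R] M) (hf : ∀ v ∈ basisSpan b S p, f v = 0) {v : F.X p}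
    (hv : v ∈ basisSpan b T p) : f (subquotientIncl b S T p (subquotientProj b S T p v)) = f v :=
  sub_eq_zero.1 (by rw [← map_sub]; exact hf _ (subquotientIncl_proj_sub_mem hv))

lemma subquotientD_proj (hS : IsSupportClosed b S) {p : ℤ} {v : F.X p}
    (hv : v ∈ basisSpan b T p) :
    subquotientD b S T p (subquotientProj b S T p v) =
      subquotientProj b S T (p + 1) (F.d p (p + 1) v) :=
  map_subquotientIncl_proj (subquotientProj b S T (p + 1) ∘ₗ (F.d p (p + 1)).hom)
    (fun _ hw => subquotientProj_eq_zero (hS.d_mem hw)) hv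

variable (hS : IsSupportClosed b S) (hT : IsSupportClosed b T)
include hS hT

lemma subquotientD_subquotientD (p : ℤ) (x : Sigma.mk p ⁻¹' (T \ S) →₀ R) :
    subquotientD b S T (p + 1) (subquotientD b S T p x) = 0 :=
  (subquotientD_proj hS (hT.d_mem (subquotientIncl_mem p x))).trans <|
    congr(subquotientProj b S T _ ($(F.d_comp_d p (p + 1) (p + 1 + 1))
      (subquotientIncl b S T p x))).trans (map_zero _)

def subquotientComplex : Cx R :=
  CochainComplex.of (fun p => ModuleCat.of R (Sigma.mk p ⁻¹' (T \ S) →₀ R))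
    (fun p => ModuleCat.ofHom (subquotientD b S T p))
    (fun p => ModuleCat.hom_ext <| LinearMap.ext <| subquotientD_subquotientD hS hT p)

lemma subquotientComplex_d_apply (p : ℤ) (x : Sigma.mk p ⁻¹' (T \ S) →₀ R) :
    (subquotientComplex hS hT).d p (p + 1) x = subquotientD b S T p x := by
  simp only [subquotientComplex, CochainComplex.of_d]
  rfl

lemma subquotientComplex_free_finite (h : ∀ p, (Sigma.mk p ⁻¹' (T \ S)).Finite) (p : ℤ) :
    Module.Free R ((subquotientComplex hS hT).X p) ∧
      Module.Finite R ((subquotientComplex hS hT).X p) :=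
  have := (h p).to_subtype
  ⟨inferInstanceAs (Module.Free R (_ →₀ R)), inferInstanceAs (Module.Finite R (_ →₀ R))⟩

end Subquotient

section EqOnSpan

variable {R : Type} [Ring R] {F C : Cx R} {B : ℤ → Type}
  (b : ∀ p, Module.Basis (B p) R (F.X p))

def EqOnSpan {m : ℤ} (S : Set (Σ p, B p)) (x y : Cochain F C m) : Prop :=
  ∀ p q (hpq : p + m = q), Set.EqOn (x.v p q hpq) (y.v p q hpq) (basisSpan b S p)

variable {b} {m n : ℤ} {S : Set (Σ p, B p)}

lemma EqOnSpan.refl (x : Cochain F C m) : EqOnSpan b S x x :=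
  fun _ _ _ => Set.eqOn_refl _ _

lemma EqOnSpan.trans {x y z : Cochain F C m} (h : EqOnSpan b S x y) (h' : EqOnSpan b S y z) :
    EqOnSpan b S x z :=
  fun p q hpq => (h p q hpq).trans (h' p q hpq)

lemma EqOnSpan.mono {T : Set (Σ p, B p)} {x y : Cochain F C m} (h : EqOnSpan b T x y)
    (hST : S ⊆ T) : EqOnSpan b S x y :=
  fun p q hpq => (h p q hpq).mono (basisSpan_mono hST p)

lemma EqOnSpan.add {x x' y y' : Cochain F C m} (h : EqOnSpan b S x x') (h' : EqOnSpan b S y y') :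
    EqOnSpan b S (x + y) (x' + y') := by
  intro p q hpq v hv
  simp [Cochain.add_v, h p q hpq hv, h' p q hpq hv]

lemma EqOnSpan.sub {x x' y y' : Cochain F C m} (h : EqOnSpan b S x x') (h' : EqOnSpan b S y y') :
    EqOnSpan b S (x - y) (x' - y') := by
  intro p q hpq v hv
  simp [Cochain.sub_v, h p q hpq hv, h' p q hpq hv]

lemma eqOnSpan_of_basis {x y : Cochain F C m}
    (h : ∀ p i, ⟨p, i⟩ ∈ S → x.v p (p + m) rfl (b p i) = y.v p (p + m) rfl (b p i)) :
    EqOnSpan b S x y := by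
  rintro p _ rfl
  exact eqOn_basisSpan (f := (x.v p (p + m) rfl).hom) (g := (y.v p (p + m) rfl).hom) (h p)

lemma EqOnSpan.δ (hS : IsSupportClosed b S) {x y : Cochain F C m} (h : EqOnSpan b S x y) :
    EqOnSpan b S (δ m n x) (δ m n y) := by
  by_cases hmn : m + 1 = n
  · rintro p _ rfl v hv
    rw [δ_v_apply hmn, δ_v_apply hmn, h p _ rfl hv, h (p + 1) _ (by omega) (hS.d_mem hv)]
  · simpa [δ_shape _ _ hmn] using EqOnSpan.refl 0

end EqOnSpan

section SubquotientCochains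

variable {R : Type} [Ring R] {F C : Cx R} {B : ℤ → Type} {b : ∀ p, Module.Basis (B p) R (F.X p)}
  {S T : Set (Σ p, B p)} (hS : IsSupportClosed b S) (hT : IsSupportClosed b T) {m n : ℤ}

def subquotientRestrict (c : Cochain F C n) : Cochain (subquotientComplex hS hT) C n :=
  Cochain.mk fun p q hpq => ModuleCat.ofHom ((c.v p q hpq).hom ∘ₗ subquotientIncl b S T p)

def subquotientExtend (x : Cochain (subquotientComplex hS hT) C m) : Cochain F C m :=
  Cochain.mk fun p q hpq => ModuleCat.ofHom ((x.v p q hpq).hom ∘ₗ subquotientProj b S T p)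

lemma subquotientRestrict_zero : subquotientRestrict hS hT (0 : Cochain F C n) = 0 := by
  ext p q hpq x
  rfl

lemma δ_subquotientRestrict (hmn : m + 1 = n) {c : Cochain F C m} (hc : EqOnSpan b S c 0) :
    δ m n (subquotientRestrict hS hT c) = subquotientRestrict hS hT (δ m n c) := by
  ext p _ rfl x
  change _ = (δ m n c).v p (p + n) rfl (subquotientIncl b S T p x)
  rw [δ_v_apply hmn, δ_v_apply hmn c p (subquotientIncl b S T p x),
    subquotientComplex_d_apply hS hT p x]
  congr 2
  exact map_subquotientIncl_proj (c.v (p + 1) (p + n) _).hom (fun v hv => hc _ _ _ hv)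
    (hT.d_mem (subquotientIncl_mem p x))

lemma subquotientExtend_eqOnSpan_zero (x : Cochain (subquotientComplex hS hT) C m) :
    EqOnSpan b S (subquotientExtend hS hT x) 0 := by
  intro p q hpq v hv
  change x.v p q hpq (subquotientProj b S T p v) = 0
  rw [subquotientProj_eq_zero hv]
  exact map_zero (x.v p q hpq).hom

lemma eqOnSpan_δ_subquotientExtend (hmn : m + 1 = n)
    (x : Cochain (subquotientComplex hS hT) C m) :
    EqOnSpan b T (δ m n (subquotientExtend hS hT x)) (subquotientExtend hS hT (δ m n x)) := by
  rintro p _ rfl v hv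
  change _ = (δ m n x).v p (p + n) rfl (subquotientProj b S T p v)
  rw [δ_v_apply hmn, δ_v_apply hmn x p (subquotientProj b S T p v),
    subquotientComplex_d_apply hS hT p (subquotientProj b S T p v), subquotientD_proj hS hv]
  rfl

lemma subquotientExtend_restrict {c : Cochain F C n} (hc : EqOnSpan b S c 0) :
    EqOnSpan b T (subquotientExtend hS hT (subquotientRestrict hS hT c)) c :=
  fun p q hpq _ hv => map_subquotientIncl_proj (c.v p q hpq).hom (fun _ hw => hc p q hpq hw) hv

lemma exists_primitive_eqOnSpan (hmn : m + 1 = n)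
    (hQ : (CochainComplex.HomComplex (subquotientComplex hS hT) C).ExactAt n)
    {c : Cochain F C n} (hc : δ n (n + 1) c = 0) (hcS : EqOnSpan b S c 0) :
    ∃ x : Cochain F C m, EqOnSpan b S x 0 ∧ EqOnSpan b T (δ m n x) c := by
  obtain ⟨x, hx⟩ := (homComplex_exactAt_iff _ C hmn).1 hQ (subquotientRestrict hS hT c)
    (by rw [δ_subquotientRestrict hS hT rfl hcS, hc, subquotientRestrict_zero])
  refine ⟨subquotientExtend hS hT x, subquotientExtend_eqOnSpan_zero hS hT x, ?_⟩
  exact (eqOnSpan_δ_subquotientExtend hS hT hmn x).trans (hx ▸ subquotientExtend_restrict hS hT hcS)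

end SubquotientCochains

section PartialPrimitive

variable {R : Type} [Ring R] {F C : Cx R} {B : ℤ → Type} (b : ∀ p, Module.Basis (B p) R (F.X p))
  {m n : ℤ}

structure PartialPrimitive (z : Cochain F C n) (m : ℤ) where
  support : Set (Σ p, B p)
  cochain : Cochain F C m
  isSupportClosed : IsSupportClosed b support
  eqOnSpan : EqOnSpan b support (δ m n cochain) z

variable {b} {z : Cochain F C n}

instance : Preorder (PartialPrimitive b z m) where
  le a a' := a.support ⊆ a'.support ∧ EqOnSpan b a.support a'.cochain a.cochain
  le_refl a := ⟨subset_rfl, EqOnSpan.refl _⟩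
  le_trans _ _ _ h h' := ⟨h.1.trans h'.1, (h'.2.mono h.1).trans h.2⟩

variable (b) in
lemma exists_eqOnSpan_of_pairwise {ι : Type*} (S : ι → Set (Σ p, B p)) (y : ι → Cochain F C m)
    (h : ∀ j k, EqOnSpan b (S j ∩ S k) (y j) (y k)) :
    ∃ y' : Cochain F C m, ∀ j, EqOnSpan b (S j) y' (y j) := by
  classical
  refine ⟨Cochain.mk fun p q hpq => ModuleCat.ofHom <| (b p).constr ℕ fun i =>
    if hi : ∃ j, ⟨p, i⟩ ∈ S j then (y hi.choose).v p q hpq (b p i) else 0,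
    fun j => eqOnSpan_of_basis fun p i hi => ?_⟩
  have hex : ∃ j, ⟨p, i⟩ ∈ S j := ⟨j, hi⟩
  change (b p).constr ℕ _ (b p i) = _
  rw [Module.Basis.constr_basis, dif_pos hex]
  exact h _ _ p _ rfl (basis_mem_basisSpan ⟨hex.choose_spec, hi⟩)

lemma PartialPrimitive.bddAbove_of_isChain {c : Set (PartialPrimitive b z m)}
    (hc : IsChain (· ≤ ·) c) : BddAbove c := by
  obtain ⟨y, hy⟩ := exists_eqOnSpan_of_pairwise b (fun a : c => a.1.support) (fun a => a.1.cochain)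
    fun a a' => by
      rcases eq_or_ne a a' with rfl | hne
      · exact EqOnSpan.refl _
      rcases hc a.2 a'.2 (Subtype.coe_injective.ne hne) with h | h
      · exact fun p q hpq _ hv => (h.2.mono Set.inter_subset_left p q hpq hv).symm
      · exact h.2.mono Set.inter_subset_right
  refine ⟨⟨⋃ a : c, a.1.support, y, isSupportClosed_iUnion fun a => a.1.isSupportClosed,
    eqOnSpan_of_basis fun p i hi => ?_⟩, fun a ha => ⟨Set.subset_iUnion (fun a : c => a.1.support)
    ⟨a, ha⟩, hy ⟨a, ha⟩⟩⟩
  obtain ⟨a, hia⟩ := Set.mem_iUnion.1 hi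
  exact ((hy a).δ a.1.isSupportClosed p _ rfl (basis_mem_basisSpan hia)).trans
    (a.1.eqOnSpan p _ rfl (basis_mem_basisSpan hia))

/-- The new basis vectors all lie in the forward closure of `x₀`, which is finite in each degree,
so `hfin` applies to the subquotient they span. -/
lemma PartialPrimitive.exists_le_mem (hmn : m + 1 = n) (hz : δ n (n + 1) z = 0)
    (hfin : ∀ Q : Cx R, (∀ k, Module.Free R (Q.X k) ∧ Module.Finite R (Q.X k)) →
      (CochainComplex.HomComplex Q C).ExactAt n)
    (a : PartialPrimitive b z m) (x₀ : Σ p, B p) : ∃ a', a ≤ a' ∧ x₀ ∈ a'.support := by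
  have hT := a.isSupportClosed.union (isSupportClosed_forwardClosure x₀)
  obtain ⟨x, hxS, hxT⟩ := exists_primitive_eqOnSpan a.isSupportClosed hT hmn
    (hfin _ (subquotientComplex_free_finite a.isSupportClosed hT fun p =>
      (finite_forwardClosure_slice x₀ p).subset fun _ hi => hi.1.resolve_left hi.2))
    (c := z - δ m n a.cochain) (by rw [δ_sub, hz, δ_δ, sub_zero])
    (by simpa using (EqOnSpan.refl z).sub a.eqOnSpan)
  refine ⟨⟨_, a.cochain + x, hT, ?_⟩, ⟨Set.subset_union_left, ?_⟩,
    Or.inr (mem_forwardClosure_self x₀)⟩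
  · simpa [δ_add] using (EqOnSpan.refl (δ m n a.cochain)).add hxT
  · simpa using (EqOnSpan.refl a.cochain).add hxS

end PartialPrimitive

lemma homComplex_exactAt_of_basis {R : Type} [Ring R] {F : Cx R} {B : ℤ → Type}
    (b : ∀ p, Module.Basis (B p) R (F.X p)) (C : Cx R) (n : ℤ)
    (hfin : ∀ Q : Cx R, (∀ k, Module.Free R (Q.X k) ∧ Module.Finite R (Q.X k)) →
      (CochainComplex.HomComplex Q C).ExactAt n) :
    (CochainComplex.HomComplex F C).ExactAt n := by
  rw [homComplex_exactAt_iff F C (sub_add_cancel n 1)]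
  intro z hz
  obtain ⟨a, ha⟩ := zorn_le (α := PartialPrimitive b z (n - 1))
    fun _ hc => PartialPrimitive.bddAbove_of_isChain hc
  have hfull (x : Σ p, B p) : x ∈ a.support := by
    obtain ⟨a', haa', hx⟩ := a.exists_le_mem (sub_add_cancel n 1) hz hfin x
    exact (ha haa').1 hx
  exact ⟨a.cochain, Cochain.ext _ _ fun p q hpq => ModuleCat.hom_ext <|
    (b p).ext fun i => a.eqOnSpan p q hpq (basis_mem_basisSpan (hfull ⟨p, i⟩))⟩

lemma homComplex_exactAt_of_free {R : Type} [Ring R] {F : Cx R}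
    [∀ p, Module.Free R (F.X p)] (C : Cx R) (n : ℤ)
    (hfin : ∀ Q : Cx R, (∀ k, Module.Free R (Q.X k) ∧ Module.Finite R (Q.X k)) →
      (CochainComplex.HomComplex Q C).ExactAt n) :
    (CochainComplex.HomComplex F C).ExactAt n :=
  homComplex_exactAt_of_basis (fun p => Module.Free.chooseBasis R (F.X p)) C n hfin

/-- If every complex of finitely generated free left `R`-modules is semi-projective, then
every complex of projective left `R`-modules is semi-projective. -/
theorem P0_implies_P1 (R : Type) [Ring R]
    (h : ∀ P : Cx R, (∀ n : ℤ, Module.Free R (P.X n) ∧ Module.Finite R (P.X n)) →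
      SemiProjective P) :
    ∀ P : Cx R, (∀ n : ℤ, Module.Projective R (P.X n)) → SemiProjective P := by
  intro P hP
  refine ⟨hP, fun C hC n => ?_⟩
  let W (k : ℤ) : ModuleCat.{0} R := ModuleCat.of R (ℕ →₀ (P.X k →₀ R))
  have hfree (k : ℤ) : Module.Free R ((P.addDisks W).X k) :=
    have := Module.Projective.free_prod_finsupp (R := R) (P.X k)
    P.free_addDisks_X W k
  exact homComplex_exactAt_of_retract (P.toAddDisks W) (P.fromAddDisks W)
    (P.toAddDisks_comp_fromAddDisks W) C
    (homComplex_exactAt_of_free C n fun Q hQ => (h Q hQ).2 C hC n)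

end
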